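/- For a field F, the 2×2 upper triangular matrix ring T₂(F) is a J-Armendariz ring that is not abelian: the idempotent E₂₂ = (0,0;0,1) is not central. -/

import Mathlib

/-
The diagonal entries are ring homomorphisms `T_n(R) → R`. If `f g = 0` in
`T_n(R)[X]` and `R` is a domain, then for each `k` the `k`-th diagonal images of `f` and `g`
multiply to zero in `R[X]`, so one of them vanishes; hence every product of coefficients
`f_i g_j` has zero diagonal. Such an element is strictly upper triangular, so `y (f_i g_j)` is
nilpotent for every `y` and `1 + y (f_i g_j)` is a unit: `f_i g_j` lies in the Jacobson radical.
The idempotent `E₂₂` is not central because `E₁₂ E₂₂ = E₁₂` while `E₂₂ E₁₂ = 0`.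
-/

open Polynomial

/-- A ring `R` is J-Armendariz if whenever `f * g = 0` in `R[X]`, every product of a
coefficient of `f` with a coefficient of `g` lies in the Jacobson radical of `R`. -/
def IsJArmendariz (R : Type*) [Ring R] : Prop :=
  ∀ f g : R[X], f * g = 0 →
    ∀ i j : ℕ, f.coeff i * g.coeff j ∈ Ideal.jacobson (⊥ : Ideal R)

/-- The subring of `n × n` upper triangular matrices over `R`. -/
def upperTriangular (n : ℕ) (R : Type*) [Ring R] :
    Subring (Matrix (Fin n) (Fin n) R) where
  carrier := {M | ∀ i j : Fin n, j < i → M i j = 0}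
  zero_mem' _ _ _ := rfl
  one_mem' i j hij := Matrix.one_apply_ne (ne_of_gt hij)
  add_mem' {M N} ha hb i j hij := by
    simp only [Matrix.add_apply, ha i j hij, hb i j hij, add_zero]
  neg_mem' {M} h i j hij := by simp only [Matrix.neg_apply, h i j hij, neg_zero]
  mul_mem' {M N} ha hb := by
    intro i j hij
    rw [Matrix.mul_apply]
    apply Finset.sum_eq_zero
    intro k _
    rcases lt_or_ge k i with h | h
    · rw [ha i k h, zero_mul]
    · rw [hb k j (lt_of_lt_of_le hij h), mul_zero]

namespace upperTriangular

variable {n : ℕ} {R : Type*} [Ring R]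

def diagHom (k : Fin n) : upperTriangular n R →+* R where
  toFun M := (M : Matrix (Fin n) (Fin n) R) k k
  map_one' := by simp
  map_mul' M N := by
    change ((M : Matrix (Fin n) (Fin n) R) * (N : Matrix (Fin n) (Fin n) R)) k k = _
    rw [Matrix.mul_apply, Finset.sum_eq_single k]
    · intro l _ hl
      rcases lt_or_gt_of_ne hl with h | h
      · rw [M.2 k l h, zero_mul]
      · rw [N.2 l k h, mul_zero]
    · intro h
      exact absurd (Finset.mem_univ k) h
  map_zero' := rfl
  map_add' _ _ := rfl

theorem _root_.Matrix.pow_apply_eq_zero_of_lt_add {M : Matrix (Fin n) (Fin n) R}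
    (hM : ∀ i j, j ≤ i → M i j = 0) (k : ℕ) {i j : Fin n} (hij : (j : ℕ) < i + k) :
    (M ^ k) i j = 0 := by
  induction k generalizing j with
  | zero => exact Matrix.one_apply_ne (by omega)
  | succ k ih =>
    rw [pow_succ, Matrix.mul_apply]
    refine Finset.sum_eq_zero fun l _ => ?_
    rcases lt_or_ge (l : ℕ) (i + k) with hl | hl
    · rw [ih hl, zero_mul]
    · rw [hM l j (by omega), mul_zero]

theorem isNilpotent_of_diagHom_eq_zero {x : upperTriangular n R} (hx : ∀ k, diagHom k x = 0) :
    IsNilpotent x := by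
  have hstrict : ∀ i j, j ≤ i → (x : Matrix (Fin n) (Fin n) R) i j = 0 := fun i j hji =>
    hji.lt_or_eq.elim (x.2 i j) fun h => h ▸ hx i
  refine ⟨n, Subtype.ext ?_⟩
  ext i j
  rw [Subring.coe_pow]
  exact Matrix.pow_apply_eq_zero_of_lt_add hstrict n (by omega)

theorem mem_jacobson_of_diagHom_eq_zero {x : upperTriangular n R} (hx : ∀ k, diagHom k x = 0) :
    x ∈ Ideal.jacobson (⊥ : Ideal (upperTriangular n R)) := by
  refine Ideal.mem_jacobson_iff.mpr fun y => ?_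
  have hyx : IsNilpotent (y * x) :=
    isNilpotent_of_diagHom_eq_zero fun k => by rw [map_mul, hx, mul_zero]
  obtain ⟨u, hu⟩ := hyx.isUnit_add_one
  refine ⟨↑u⁻¹, Ideal.mem_bot.mpr ?_⟩
  rw [mul_assoc, ← mul_add_one, ← hu, Units.inv_mul, sub_self]

theorem isJArmendariz [NoZeroDivisors R] : IsJArmendariz (upperTriangular n R) := by
  intro f g hfg i j
  refine mem_jacobson_of_diagHom_eq_zero fun k => ?_
  have hmap : f.map (diagHom k) * g.map (diagHom k) = 0 := by
    rw [← Polynomial.map_mul, hfg, Polynomial.map_zero]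
  rw [map_mul, ← coeff_map, ← coeff_map]
  rcases mul_eq_zero.mp hmap with h | h <;> simp [h]

theorem single_mem {i j : Fin n} (hij : i ≤ j) (c : R) :
    Matrix.single i j c ∈ upperTriangular n R := fun _ _ hlt =>
  Matrix.single_apply_of_ne _ _ _ _ _ (by rintro ⟨rfl, rfl⟩; exact hlt.not_ge hij)

theorem single_same_not_mem_center [Nontrivial R] {i j : Fin n} (hij : i < j) :
    (⟨Matrix.single j j 1, single_mem le_rfl 1⟩ : upperTriangular n R) ∉
      Set.center (upperTriangular n R) := by
  intro hc
  have hcomm := congrArg (fun M : upperTriangular n R => (M : Matrix (Fin n) (Fin n) R) i j)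
    (hc.comm ⟨Matrix.single i j 1, single_mem hij.le 1⟩)
  simp only [Subring.coe_mul, Matrix.single_mul_single_same, one_mul,
    Matrix.single_mul_single_of_ne _ _ _ _ hij.ne', Matrix.single_apply_same] at hcomm
  exact one_ne_zero (hcomm.symm.trans (Matrix.zero_apply i j))

end upperTriangular

theorem upperTriangular_two_isJArmendariz_not_abelian (F : Type*) [Field F] :
    IsJArmendariz (upperTriangular 2 F) ∧
      ∃ e : upperTriangular 2 F,
        (e : Matrix (Fin 2) (Fin 2) F) = Matrix.single 1 1 (1 : F) ∧
        IsIdempotentElem e ∧ e ∉ Set.center (upperTriangular 2 F) :=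
  ⟨upperTriangular.isJArmendariz, ⟨_, upperTriangular.single_mem le_rfl 1⟩, rfl,
    Subtype.ext (by simp),
    upperTriangular.single_same_not_mem_center (i := 0) (by decide)⟩
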